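/- A separating bijection need not have separating inverse in infinite dimensions: the map T : AC([0,1], c₀) → AC([0,1] ∪ [2,3], c₀) defined by Tf(x) = (λ₁, λ₃, λ₅, ...) and Tf(2+x) = (λ₂, λ₄, λ₆, ...) for x ∈ [0,1], where f(x) = (λ₁, λ₂, λ₃, ...), is a linear, bijective, separating, continuous map whose inverse T⁻¹ is not separating. -/

import Mathlib

open Set

def AbsCont {E : Type*} [NormedAddCommGroup E] {X : Set ℝ} (f : X → E) : Prop :=
  ∀ ε > (0 : ℝ), ∃ δ > (0 : ℝ), ∀ n : ℕ, ∀ a b : Fin n → X,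
    (∀ i, (a i : ℝ) < b i) →
    (∀ i j, i ≠ j → Disjoint (Set.Ioo (a i : ℝ) (b i)) (Set.Ioo (a j : ℝ) (b j))) →
    (∑ i, ((b i : ℝ) - a i)) < δ →
    (∑ i, ‖f (b i) - f (a i)‖) < ε

def PartSums {E : Type*} [NormedAddCommGroup E] {X : Set ℝ} (f : X → E) : Set ℝ :=
  {s | ∃ n : ℕ, ∃ x : Fin (n + 1) → X, StrictMono (fun i => (x i : ℝ)) ∧
    s = ∑ i : Fin n, ‖f (x i.succ) - f (x i.castSucc)‖}

noncomputable def var {E : Type*} [NormedAddCommGroup E] {X : Set ℝ} (f : X → E) : ℝ :=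
  sSup (PartSums f)

/-- The supremum norm of `f` on `X`. -/
noncomputable def supNorm {E : Type*} [NormedAddCommGroup E] {X : Set ℝ} (f : X → E) : ℝ :=
  sSup {r | ∃ x : X, r = ‖f x‖}

/-- The AC norm `‖f‖_AC = ‖f‖_∞ + V(f;X)`. -/
noncomputable def ACnorm {E : Type*} [NormedAddCommGroup E] {X : Set ℝ} (f : X → E) : ℝ :=
  supNorm f + var f
/-- `T` is separating on absolutely continuous functions: disjoint cozero sets are
mapped to disjoint cozero sets. -/
def Separating {E F : Type*} [NormedAddCommGroup E] [NormedAddCommGroup F]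
    {X Y : Set ℝ} (T : (X → E) → (Y → F)) : Prop :=
  ∀ f g : X → E, AbsCont f → AbsCont g → (∀ x, f x = 0 ∨ g x = 0) →
    ∀ y, T f y = 0 ∨ T g y = 0

/-!
On `[0,1]` and on `[2,3]` every value of `Tf` is a subsequence of a value of `f`, so each
`‖Tf b - Tf a‖` is dominated by some `‖f b' - f a'‖`. This gives linearity, separation and
absolute continuity of `Tf` on each piece, and the pieces glue because they are a positive
distance apart. The variation of `Tf` is at most twice that of `f` plus the jump across the gap,
which the sup norm controls; the variation of `f` is finite since absolutely continuous functions
on an interval have bounded variation. Interleaving the two halves inverts `T`. The inverse is not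
separating: the constants `e₀` and `e₁` overlap everywhere, while `Te₀` vanishes on `[2,3]` and
`Te₁` on `[0,1]`.
-/

open Filter
open scoped ZeroAtInfty

section AbsCont

variable {E E' F : Type*} [NormedAddCommGroup E] [NormedAddCommGroup E'] [NormedAddCommGroup F]
  {X Y : Set ℝ}

theorem AbsCont.exists_pos_sum_lt {f : X → E} (hf : AbsCont f) {ε : ℝ} (hε : 0 < ε) :
    ∃ δ > 0, ∀ (ι : Type) [Fintype ι] (a b : ι → X), (∀ i, (a i : ℝ) < b i) →
      (∀ i j, i ≠ j → Disjoint (Ioo (a i : ℝ) (b i)) (Ioo (a j : ℝ) (b j))) →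
      ∑ i, ((b i : ℝ) - a i) < δ →
      ∑ i, ‖f (b i) - f (a i)‖ < ε := by
  obtain ⟨δ, hδ, hf⟩ := hf ε hε
  refine ⟨δ, hδ, fun ι _ a b hab hdisj hlen => ?_⟩
  let e := (Fintype.equivFin ι).symm
  rw [← e.sum_comp] at hlen ⊢
  exact hf _ (a ∘ e) (b ∘ e) (fun i => hab (e i))
    (fun i j hij => hdisj _ _ (e.injective.ne hij)) hlen

theorem AbsCont.of_norm_sub_le {h : X → E} {g : X → F} (hh : AbsCont h)
    (hg : ∀ a b, ‖g b - g a‖ ≤ ‖h b - h a‖) : AbsCont g := by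
  intro ε hε
  obtain ⟨δ, hδ, hh⟩ := hh ε hε
  exact ⟨δ, hδ, fun n a b hab hdisj hlen =>
    (Finset.sum_le_sum fun i _ => hg (a i) (b i)).trans_lt (hh n a b hab hdisj hlen)⟩

theorem AbsCont.of_norm_sub_le_add {h₁ : X → E} {h₂ : X → E'} {g : X → F} (hh₁ : AbsCont h₁)
    (hh₂ : AbsCont h₂) (hg : ∀ a b, ‖g b - g a‖ ≤ ‖h₁ b - h₁ a‖ + ‖h₂ b - h₂ a‖) :
    AbsCont g := by
  intro ε hε
  obtain ⟨δ₁, hδ₁, hh₁⟩ := hh₁ (ε / 2) (half_pos hε)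
  obtain ⟨δ₂, hδ₂, hh₂⟩ := hh₂ (ε / 2) (half_pos hε)
  refine ⟨min δ₁ δ₂, lt_min hδ₁ hδ₂, fun n a b hab hdisj hlen => ?_⟩
  calc ∑ i, ‖g (b i) - g (a i)‖
      ≤ ∑ i, ‖h₁ (b i) - h₁ (a i)‖ + ∑ i, ‖h₂ (b i) - h₂ (a i)‖ := by
        rw [← Finset.sum_add_distrib]; exact Finset.sum_le_sum fun i _ => hg (a i) (b i)
    _ < ε / 2 + ε / 2 := add_lt_add (hh₁ n a b hab hdisj (hlen.trans_le (min_le_left _ _)))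
        (hh₂ n a b hab hdisj (hlen.trans_le (min_le_right _ _)))
    _ = ε := add_halves ε

theorem AbsCont.comp_add_const {f : X → E} (hf : AbsCont f) {φ : Y → X} (c : ℝ)
    (hφ : ∀ y, (φ y : ℝ) = y + c) : AbsCont (f ∘ φ) := by
  intro ε hε
  obtain ⟨δ, hδ, hf⟩ := hf ε hε
  refine ⟨δ, hδ, fun n a b hab hdisj hlen => hf n (φ ∘ a) (φ ∘ b) ?_ ?_ ?_⟩
  · intro i; simpa [hφ] using hab i
  · intro i j hij
    simpa only [Function.comp_apply, hφ, ← image_add_const_Ioo] using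
      (hdisj i j hij).image (add_left_injective c).injOn (subset_univ _) (subset_univ _)
  · simpa [hφ] using hlen

theorem absCont_const (c : E) : AbsCont fun _ : X => c := fun ε hε =>
  ⟨1, one_pos, fun n a b _ _ _ => by simpa using hε⟩

open scoped Classical in
theorem AbsCont.exists_pos_sum_filter_lt {g : Y → F} {C : Set ℝ} (hCY : C ⊆ Y)
    (hC : AbsCont fun x : C => g ⟨x, hCY x.2⟩) {ε : ℝ} (hε : 0 < ε) :
    ∃ δ > 0, ∀ (n : ℕ) (a b : Fin n → Y), (∀ i, (a i : ℝ) < b i) →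
      (∀ i j, i ≠ j → Disjoint (Ioo (a i : ℝ) (b i)) (Ioo (a j : ℝ) (b j))) →
      ∑ i, ((b i : ℝ) - a i) < δ →
      ∑ i with (a i : ℝ) ∈ C ∧ (b i : ℝ) ∈ C, ‖g (b i) - g (a i)‖ < ε := by
  obtain ⟨δ, hδ, hC⟩ := hC.exists_pos_sum_lt hε
  refine ⟨δ, hδ, fun n a b hab hdisj hlen => ?_⟩
  set S := Finset.univ.filter fun i => (a i : ℝ) ∈ C ∧ (b i : ℝ) ∈ C
  have hmem : ∀ i : S, (a i : ℝ) ∈ C ∧ (b i : ℝ) ∈ C := fun i => (Finset.mem_filter.1 i.2).2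
  have hlenS : ∑ i ∈ S, ((b i : ℝ) - a i) < δ :=
    (Finset.sum_le_sum_of_subset_of_nonneg S.subset_univ fun i _ _ =>
      (sub_pos.2 (hab i)).le).trans_lt hlen
  rw [← Finset.sum_coe_sort] at hlenS ⊢
  exact hC S (fun i => ⟨a i, (hmem i).1⟩) (fun i => ⟨b i, (hmem i).2⟩) (fun i => hab i)
    (fun i j hij => hdisj i j (Subtype.coe_injective.ne hij)) hlenS

theorem AbsCont.union {A B : Set ℝ} {g : (A ∪ B : Set ℝ) → F} {r : ℝ} (hr : 0 < r)
    (hAB : ∀ a ∈ A, ∀ b ∈ B, r ≤ |b - a|)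
    (hA : AbsCont fun x : A => g ⟨x, mem_union_left B x.2⟩)
    (hB : AbsCont fun x : B => g ⟨x, mem_union_right A x.2⟩) : AbsCont g := by
  classical
  intro ε hε
  obtain ⟨δA, hδA, hA⟩ := hA.exists_pos_sum_filter_lt Set.subset_union_left (half_pos hε)
  obtain ⟨δB, hδB, hB⟩ := hB.exists_pos_sum_filter_lt Set.subset_union_right (half_pos hε)
  refine ⟨min r (min δA δB), lt_min hr (lt_min hδA hδB), fun n a b hab hdisj hlen => ?_⟩
  have hshort : ∀ i, (b i : ℝ) - a i < r := fun i =>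
    (Finset.single_le_sum (fun j _ => (sub_pos.2 (hab j)).le) (Finset.mem_univ i)).trans_lt
      (hlen.trans_le (min_le_left _ _))
  -- a short interval cannot jump across the gap between `A` and `B`
  have hsame : ∀ i, ¬((a i : ℝ) ∈ A ∧ (b i : ℝ) ∈ A) → (a i : ℝ) ∈ B ∧ (b i : ℝ) ∈ B := by
    intro i hi
    have := hab i
    rcases (a i).2 with ha | ha <;> rcases (b i).2 with hb | hb
    · exact absurd ⟨ha, hb⟩ hi
    · linarith [hshort i, hAB _ ha _ hb, le_abs_self ((b i : ℝ) - a i),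
        abs_of_pos (sub_pos.2 this)]
    · linarith [hshort i, hAB _ hb _ ha, abs_sub_comm ((a i : ℝ)) (b i),
        abs_of_pos (sub_pos.2 this)]
    · exact ⟨ha, hb⟩
  have hBsub : Finset.univ.filter (fun i => ¬((a i : ℝ) ∈ A ∧ (b i : ℝ) ∈ A)) ⊆
      Finset.univ.filter (fun i => (a i : ℝ) ∈ B ∧ (b i : ℝ) ∈ B) := fun i hi =>
    Finset.mem_filter.2 ⟨Finset.mem_univ i, hsame i (Finset.mem_filter.1 hi).2⟩
  rw [← Finset.sum_filter_add_sum_filter_not Finset.univ fun i => (a i : ℝ) ∈ A ∧ (b i : ℝ) ∈ A]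
  calc _ < ε / 2 + ε / 2 := add_lt_add_of_lt_of_le
        (hA n a b hab hdisj (hlen.trans_le ((min_le_right _ _).trans (min_le_left _ _))))
        ((Finset.sum_le_sum_of_subset_of_nonneg hBsub fun _ _ _ => norm_nonneg _).trans
          (hB n a b hab hdisj (hlen.trans_le ((min_le_right _ _).trans (min_le_right _ _)))).le)
    _ = ε := add_halves ε

end AbsCont

section Variation

variable {E F : Type*} [NormedAddCommGroup E] [NormedAddCommGroup F] {X : Set ℝ}

theorem partSums_eq_range (f : X → E) :
    PartSums f = range fun p : (n : ℕ) × {u : ℕ → X // StrictMonoOn u (Iic n) ∧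
        ∀ i ∈ Iic n, u i ∈ univ} =>
      ∑ i ∈ Finset.range p.1, ‖f (p.2.1 (i + 1)) - f (p.2.1 i)‖ := by
  ext s
  constructor
  · rintro ⟨n, x, hx, rfl⟩
    refine ⟨⟨n, fun i => x ⟨min i n, by omega⟩, fun i hi j hj hij => hx ?_, fun _ _ => trivial⟩,
      ?_⟩
    · simp only [mem_Iic] at hi hj
      simp [Fin.lt_def, Nat.min_eq_left hi, Nat.min_eq_left hj, hij]
    · dsimp only
      rw [← Fin.sum_univ_eq_sum_range]
      refine Finset.sum_congr rfl fun i _ => ?_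
      congr 2 <;> refine congrArg (f ∘ x) (Fin.ext ?_) <;> simp
  · rintro ⟨⟨n, u, hu, -⟩, rfl⟩
    refine ⟨n, fun i => u i, fun i j hij => hu (mem_Iic.2 (Nat.lt_succ_iff.1 i.isLt))
      (mem_Iic.2 (Nat.lt_succ_iff.1 j.isLt)) hij, ?_⟩
    dsimp only
    rw [← Fin.sum_univ_eq_sum_range]
    rfl

/-- Both sides are the junk value `0` when the variation is infinite. -/
theorem var_eq_toReal_eVariationOn (f : X → E) : var f = (eVariationOn f univ).toReal := by
  rw [eVariationOn.eVariationOn_eq_strictMonoOn, ENNReal.toReal_iSup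
    fun p => ENNReal.sum_ne_top.2 fun i _ => edist_ne_top _ _, var, partSums_eq_range]
  refine congrArg sSup (congrArg range (funext fun p => ?_))
  rw [ENNReal.toReal_sum fun i _ => edist_ne_top _ _]
  simp [edist_dist, dist_eq_norm]

theorem supNorm_eq_iSup (f : X → E) : supNorm f = ⨆ x, ‖f x‖ := by
  rw [supNorm, iSup]
  congr 1
  ext r
  simp [eq_comm]

theorem BoundedVariationOn.bddAbove_range_norm {α : Type*} [LinearOrder α] {f : α → E}
    (hf : BoundedVariationOn f univ) : BddAbove (range fun x => ‖f x‖) := by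
  cases isEmpty_or_nonempty α with
  | inl _ => simp
  | inr h =>
    obtain ⟨x₀⟩ := h
    refine ⟨‖f x₀‖ + (eVariationOn f univ).toReal, ?_⟩
    rintro _ ⟨x, rfl⟩
    linarith [norm_le_norm_add_norm_sub' (f x) (f x₀),
      dist_eq_norm (f x) (f x₀) ▸ hf.dist_le (mem_univ x) (mem_univ x₀)]

theorem eVariationOn_le_of_edist_le {α : Type*} [LinearOrder α] {f : α → E} {g : α → F}
    {s : Set α} (h : ∀ x ∈ s, ∀ y ∈ s, edist (f x) (f y) ≤ edist (g x) (g y)) :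
    eVariationOn f s ≤ eVariationOn g s :=
  iSup_mono fun p => Finset.sum_le_sum fun _ _ => h _ (p.2.2.2 _) _ (p.2.2.2 _)

end Variation

section BoundedVariation

variable {E : Type*} [NormedAddCommGroup E] {a b : ℝ}

theorem AbsCont.absolutelyContinuousOnInterval_IccExtend {f : Icc a b → E} (hf : AbsCont f)
    (hab : a ≤ b) : AbsolutelyContinuousOnInterval (IccExtend hab f) a b := by
  classical
  rw [absolutelyContinuousOnInterval_iff]
  intro ε hε
  obtain ⟨δ, hδ, hf⟩ := hf.exists_pos_sum_lt hε
  refine ⟨δ, hδ, fun ⟨n, I⟩ ⟨hmem, hdisj⟩ hlen => ?_⟩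
  simp only [uIcc_of_le hab] at hmem
  -- degenerate intervals contribute nothing; the others are oriented as `Ioo (min) (max)`
  set S := (Finset.range n).filter fun i => (I i).1 ≠ (I i).2
  have hS : ∀ i : S, i.1 ∈ Finset.range n ∧ (I i).1 ≠ (I i).2 := fun i => Finset.mem_filter.1 i.2
  let lo : S → Icc a b := fun i => ⟨min (I i).1 (I i).2,
    le_min (hmem i (hS i).1).1.1 (hmem i (hS i).1).2.1,
    (min_le_left _ _).trans (hmem i (hS i).1).1.2⟩
  let hi : S → Icc a b := fun i => ⟨max (I i).1 (I i).2,
    (hmem i (hS i).1).1.1.trans (le_max_left _ _),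
    max_le (hmem i (hS i).1).1.2 (hmem i (hS i).1).2.2⟩
  have hdist : ∀ i : S, dist (IccExtend hab f (I i).1) (IccExtend hab f (I i).2) =
      ‖f (hi i) - f (lo i)‖ := by
    intro i
    obtain ⟨h₁, h₂⟩ := hmem i (hS i).1
    rw [IccExtend_of_mem hab f h₁, IccExtend_of_mem hab f h₂]
    rcases le_total (I i).1 (I i).2 with h | h
    · rw [show hi i = ⟨_, h₂⟩ from Subtype.ext (max_eq_right h),
        show lo i = ⟨_, h₁⟩ from Subtype.ext (min_eq_left h), dist_comm, dist_eq_norm]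
    · rw [show hi i = ⟨_, h₁⟩ from Subtype.ext (max_eq_left h),
        show lo i = ⟨_, h₂⟩ from Subtype.ext (min_eq_right h), dist_eq_norm]
  have hdegenerate : ∀ i ∈ Finset.range n,
      dist (IccExtend hab f (I i).1) (IccExtend hab f (I i).2) ≠ 0 → (I i).1 ≠ (I i).2 :=
    fun i _ hne heq => hne (by rw [heq, dist_self])
  rw [← Finset.sum_filter_of_ne hdegenerate, ← Finset.sum_coe_sort,
    Finset.sum_congr rfl fun i _ => hdist i]
  refine hf S lo hi (fun i => min_lt_max.2 (hS i).2) (fun i j hij => ?_) ?_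
  · exact (hdisj (hS i).1 (hS j).1 (Subtype.coe_injective.ne hij)).mono
      Ioo_subset_Ioc_self Ioo_subset_Ioc_self
  · calc ∑ i : S, ((hi i : ℝ) - lo i) = ∑ i : S, dist (I i).1 (I i).2 :=
          Finset.sum_congr rfl fun i _ => by
            simp [lo, hi, Real.dist_eq, max_sub_min_eq_abs, abs_sub_comm]
      _ = ∑ i ∈ S, dist (I i).1 (I i).2 := Finset.sum_coe_sort S fun i => dist (I i).1 (I i).2
      _ ≤ ∑ i ∈ Finset.range n, dist (I i).1 (I i).2 :=
          Finset.sum_le_sum_of_subset_of_nonneg (Finset.filter_subset _ _)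
            fun _ _ _ => dist_nonneg
      _ < δ := hlen

theorem AbsCont.boundedVariationOn {f : Icc a b → E} (hf : AbsCont f) :
    BoundedVariationOn f univ := by
  rcases lt_or_ge b a with hba | hab
  · have : IsEmpty (Icc a b) := isEmpty_coe_sort.2 (Icc_eq_empty_of_lt hba)
    exact BoundedVariationOn.of_subsingleton (f := f) subsingleton_of_subsingleton
  · have hF := (hf.absolutelyContinuousOnInterval_IccExtend hab).boundedVariationOn
    rw [uIcc_of_le hab] at hF
    refine ne_top_of_le_ne_top hF ?_
    calc eVariationOn f univ = eVariationOn (IccExtend hab f ∘ Subtype.val) univ := by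
          simp [Function.comp_def]
      _ ≤ eVariationOn (IccExtend hab f) (Icc a b) :=
          eVariationOn.comp_le_of_monotoneOn _ _ ((Subtype.mono_coe _).monotoneOn _)
            fun x _ => x.2

end BoundedVariation

namespace ZeroAtInftyContinuousMap

section Norm

variable {α γ β : Type*} [TopologicalSpace α] [TopologicalSpace γ] [NormedAddCommGroup β]

theorem norm_apply_le (u : α →C₀ β) (x : α) : ‖u x‖ ≤ ‖u‖ :=
  norm_toBCF_eq_norm (f := u) ▸ u.toBCF.norm_coe_le_norm x

theorem norm_le_of_forall_le {u : α →C₀ β} {C : ℝ} (hC : 0 ≤ C) (h : ∀ x, ‖u x‖ ≤ C) :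
    ‖u‖ ≤ C :=
  norm_toBCF_eq_norm (f := u) ▸ (BoundedContinuousFunction.norm_le hC).2 h

theorem norm_le_of_apply_eq_comp {u : α →C₀ β} {v : γ →C₀ β} (σ : α → γ)
    (h : ∀ x, u x = v (σ x)) : ‖u‖ ≤ ‖v‖ :=
  norm_le_of_forall_le (norm_nonneg v) fun x => h x ▸ v.norm_apply_le (σ x)

end Norm

variable {β : Type*} [NormedAddCommGroup β]

def single (i : ℕ) (b : β) : ℕ →C₀ β where
  toFun := (Pi.single i b : ℕ → β)
  continuous_toFun := continuous_of_discreteTopology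
  zero_at_infty' := by
    rw [cocompact_eq_cofinite]
    exact tendsto_const_nhds.congr' ((eventually_cofinite_ne i).mono fun n hn => by
      simp [hn])

@[simp] theorem single_apply (i : ℕ) (b : β) (n : ℕ) :
    single i b n = (Pi.single i b : ℕ → β) n := rfl

def interleave (u v : ℕ →C₀ β) : ℕ →C₀ β where
  toFun n := if Even n then u (n / 2) else v (n / 2)
  continuous_toFun := continuous_of_discreteTopology
  zero_at_infty' := by
    have hu := u.zero_at_infty'
    have hv := v.zero_at_infty'
    rw [cocompact_eq_atTop] at hu hv ⊢
    have hdiv := Nat.tendsto_div_const_atTop two_ne_zero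
    exact ((hu.comp hdiv).mono_left inf_le_left).if ((hv.comp hdiv).mono_left inf_le_left)

@[simp] theorem interleave_apply_two_mul (u v : ℕ →C₀ β) (k : ℕ) :
    interleave u v (2 * k) = u k := by
  simp [interleave]

@[simp] theorem interleave_apply_two_mul_add_one (u v : ℕ →C₀ β) (k : ℕ) :
    interleave u v (2 * k + 1) = v k := by
  simp [interleave, Nat.add_div_of_dvd_right]

theorem interleave_sub (u v u' v' : ℕ →C₀ β) :
    interleave (u - u') (v - v') = interleave u v - interleave u' v' := by
  ext n
  obtain ⟨k, rfl | rfl⟩ := Nat.even_or_odd' n <;> simp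

theorem norm_interleave_le (u v : ℕ →C₀ β) : ‖interleave u v‖ ≤ ‖u‖ + ‖v‖ := by
  refine norm_le_of_forall_le (by positivity) fun n => ?_
  obtain ⟨k, rfl | rfl⟩ := Nat.even_or_odd' n
  · simpa using (u.norm_apply_le k).trans (le_add_of_nonneg_right (norm_nonneg v))
  · simpa using (v.norm_apply_le k).trans (le_add_of_nonneg_left (norm_nonneg u))

end ZeroAtInftyContinuousMap

section OddEvenSplit

local notation "X₀" => Icc (0:ℝ) 1
local notation "Y₀" => (Icc (0:ℝ) 1 ∪ Icc (2:ℝ) 3 : Set ℝ)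

def inclLeft (x : X₀) : Y₀ := ⟨x, mem_union_left _ x.2⟩

def inclRight (x : X₀) : Y₀ :=
  ⟨(x : ℝ) + 2, mem_union_right _ ⟨by linarith [x.2.1], by linarith [x.2.2]⟩⟩

def shiftDown (y : Icc (2:ℝ) 3) : X₀ := ⟨y - 2, by linarith [y.2.1], by linarith [y.2.2]⟩

theorem inclRight_shiftDown (y : Icc (2:ℝ) 3) :
    inclRight (shiftDown y) = ⟨y, mem_union_right _ y.2⟩ :=
  Subtype.ext (sub_add_cancel (y : ℝ) 2)

theorem union_cases {P : Y₀ → Prop} (hl : ∀ x, P (inclLeft x)) (hr : ∀ x, P (inclRight x))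
    (y : Y₀) : P y := by
  obtain ⟨y, hy | hy⟩ := y
  · exact hl ⟨y, hy⟩
  · exact inclRight_shiftDown ⟨y, hy⟩ ▸ hr _

theorem range_inclLeft_union_range_inclRight : range inclLeft ∪ range inclRight = univ :=
  eq_univ_of_forall <| union_cases (fun x => Or.inl ⟨x, rfl⟩) (fun x => Or.inr ⟨x, rfl⟩)

theorem monotone_inclLeft : Monotone inclLeft := fun _ _ h => h

theorem monotone_inclRight : Monotone inclRight := fun _ _ h => add_le_add_left (α := ℝ) h 2

theorem isGreatest_range_inclLeft : IsGreatest (range inclLeft) (inclLeft 1) :=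
  ⟨⟨1, rfl⟩, by rintro _ ⟨x, rfl⟩; exact monotone_inclLeft x.2.2⟩

theorem isLeast_range_inclRight : IsLeast (range inclRight) (inclRight 0) :=
  ⟨⟨0, rfl⟩, by rintro _ ⟨x, rfl⟩; exact monotone_inclRight x.2.1⟩

variable {β : Type*} [NormedAddCommGroup β]

open ZeroAtInftyContinuousMap

/-- `T` sends `f = (λ₁, λ₂, …)` to `(λ₁, λ₃, …)` on `[0,1]` and to `(λ₂, λ₄, …)` on `[2,3]`
(indices shifted to start at `0`). -/
def IsOddEvenSplit (T : (X₀ → ℕ →C₀ β) → (Y₀ → ℕ →C₀ β)) : Prop :=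
  ∀ f x k, T f (inclLeft x) k = f x (2 * k) ∧ T f (inclRight x) k = f x (2 * k + 1)

def oddEvenMerge (g : Y₀ → ℕ →C₀ β) (x : X₀) : ℕ →C₀ β :=
  interleave (g (inclLeft x)) (g (inclRight x))

theorem absCont_oddEvenMerge {g : Y₀ → ℕ →C₀ β} (hg : AbsCont g) : AbsCont (oddEvenMerge g) :=
  (hg.comp_add_const (φ := inclLeft) 0 fun _ => (add_zero _).symm).of_norm_sub_le_add
    (hg.comp_add_const (φ := inclRight) 2 fun _ => rfl) fun a b => by
      simpa only [oddEvenMerge, Function.comp_apply, ← interleave_sub] using norm_interleave_le _ _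

namespace IsOddEvenSplit

variable {T : (X₀ → ℕ →C₀ β) → (Y₀ → ℕ →C₀ β)}

theorem apply_inclLeft (hT : IsOddEvenSplit T) (f : X₀ → ℕ →C₀ β) (x : X₀) (k : ℕ) :
    T f (inclLeft x) k = f x (2 * k) := (hT f x k).1

theorem apply_inclRight (hT : IsOddEvenSplit T) (f : X₀ → ℕ →C₀ β) (x : X₀) (k : ℕ) :
    T f (inclRight x) k = f x (2 * k + 1) := (hT f x k).2

theorem map_add (hT : IsOddEvenSplit T) (f g : X₀ → ℕ →C₀ β) : T (f + g) = T f + T g :=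
  funext <| union_cases (fun x => ext fun k => by simp [hT.apply_inclLeft])
    (fun x => ext fun k => by simp [hT.apply_inclRight])

theorem map_smul [NormedSpace ℝ β] (hT : IsOddEvenSplit T) (c : ℝ) (f : X₀ → ℕ →C₀ β) :
    T (c • f) = c • T f :=
  funext <| union_cases (fun x => ext fun k => by simp [hT.apply_inclLeft])
    (fun x => ext fun k => by simp [hT.apply_inclRight])

theorem injective (hT : IsOddEvenSplit T) : Function.Injective T := fun f f' h => by
  funext x
  ext n
  obtain ⟨k, rfl | rfl⟩ := Nat.even_or_odd' n
  · simpa [hT.apply_inclLeft] using congrArg (fun g => g (inclLeft x) k) h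
  · simpa [hT.apply_inclRight] using congrArg (fun g => g (inclRight x) k) h

theorem apply_oddEvenMerge (hT : IsOddEvenSplit T) (g : Y₀ → ℕ →C₀ β) : T (oddEvenMerge g) = g :=
  funext <| union_cases (fun x => ext fun k => by simp [hT.apply_inclLeft, oddEvenMerge])
    (fun x => ext fun k => by simp [hT.apply_inclRight, oddEvenMerge])

theorem apply_eq_zero (hT : IsOddEvenSplit T) {f : X₀ → ℕ →C₀ β} {x : X₀} (h : f x = 0) :
    T f (inclLeft x) = 0 ∧ T f (inclRight x) = 0 :=
  ⟨ext fun k => by simp [hT.apply_inclLeft, h], ext fun k => by simp [hT.apply_inclRight, h]⟩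

theorem separating (hT : IsOddEvenSplit T) : Separating T := fun _ _ _ _ hfg =>
  union_cases
    (fun x => (hfg x).imp (fun h => (hT.apply_eq_zero h).1) fun h => (hT.apply_eq_zero h).1)
    (fun x => (hfg x).imp (fun h => (hT.apply_eq_zero h).2) fun h => (hT.apply_eq_zero h).2)

theorem exists_absCont_disjoint_apply (hT : IsOddEvenSplit T) [Nontrivial β] :
    ∃ f g : X₀ → ℕ →C₀ β, AbsCont f ∧ AbsCont g ∧
      (∀ y, T f y = 0 ∨ T g y = 0) ∧ ∀ x, f x ≠ 0 ∧ g x ≠ 0 := by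
  obtain ⟨b, hb⟩ := exists_ne (0 : β)
  refine ⟨fun _ => single 0 b, fun _ => single 1 b, absCont_const _, absCont_const _,
    union_cases (fun x => Or.inr (ext fun k => ?_)) (fun x => Or.inl (ext fun k => ?_)),
    fun x => ⟨fun h => hb ?_, fun h => hb ?_⟩⟩
  · simp [hT.apply_inclLeft]
  · simp [hT.apply_inclRight]
  · simpa using DFunLike.congr_fun h 0
  · simpa using DFunLike.congr_fun h 1

theorem norm_sub_inclLeft_le (hT : IsOddEvenSplit T) (f : X₀ → ℕ →C₀ β) (a b : X₀) :
    ‖T f (inclLeft b) - T f (inclLeft a)‖ ≤ ‖f b - f a‖ :=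
  norm_le_of_apply_eq_comp (2 * ·) fun k => by simp [hT.apply_inclLeft]

theorem norm_sub_inclRight_le (hT : IsOddEvenSplit T) (f : X₀ → ℕ →C₀ β) (a b : X₀) :
    ‖T f (inclRight b) - T f (inclRight a)‖ ≤ ‖f b - f a‖ :=
  norm_le_of_apply_eq_comp (2 * · + 1) fun k => by simp [hT.apply_inclRight]

theorem norm_apply_inclLeft_le (hT : IsOddEvenSplit T) (f : X₀ → ℕ →C₀ β) (x : X₀) :
    ‖T f (inclLeft x)‖ ≤ ‖f x‖ :=
  norm_le_of_apply_eq_comp (2 * ·) (hT.apply_inclLeft f x)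

theorem norm_apply_inclRight_le (hT : IsOddEvenSplit T) (f : X₀ → ℕ →C₀ β) (x : X₀) :
    ‖T f (inclRight x)‖ ≤ ‖f x‖ :=
  norm_le_of_apply_eq_comp (2 * · + 1) (hT.apply_inclRight f x)

theorem absCont_apply (hT : IsOddEvenSplit T) {f : X₀ → ℕ →C₀ β} (hf : AbsCont f) :
    AbsCont (T f) := by
  have hl : AbsCont (T f ∘ inclLeft) := hf.of_norm_sub_le (hT.norm_sub_inclLeft_le f)
  have hr : AbsCont (T f ∘ inclRight) := hf.of_norm_sub_le (hT.norm_sub_inclRight_le f)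
  refine AbsCont.union one_pos (fun a ha b hb => ?_) hl ?_
  · exact (by linarith [ha.2, hb.1] : (1:ℝ) ≤ b - a).trans (le_abs_self _)
  · simpa only [Function.comp_def, inclRight_shiftDown] using
      hr.comp_add_const (φ := shiftDown) (-2) fun y => sub_eq_add_neg _ _

theorem supNorm_le (hT : IsOddEvenSplit T) {f : X₀ → ℕ →C₀ β}
    (hf : BddAbove (range fun x => ‖f x‖)) :
    supNorm (T f) ≤ supNorm f := by
  rw [supNorm_eq_iSup, supNorm_eq_iSup]
  refine Real.iSup_le (union_cases (fun x => ?_) (fun x => ?_))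
    (Real.iSup_nonneg fun _ => norm_nonneg _)
  · exact (hT.norm_apply_inclLeft_le f x).trans (le_ciSup hf x)
  · exact (hT.norm_apply_inclRight_le f x).trans (le_ciSup hf x)

theorem eVariationOn_le (hT : IsOddEvenSplit T) (f : X₀ → ℕ →C₀ β) :
    eVariationOn (T f) univ ≤
      eVariationOn f univ + edist (T f (inclLeft 1)) (T f (inclRight 0)) + eVariationOn f univ := by
  rw [← range_inclLeft_union_range_inclRight, eVariationOn.union' _ isGreatest_range_inclLeft
    isLeast_range_inclRight (by norm_num [inclLeft, inclRight, ← Subtype.coe_le_coe]),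
    ← image_univ, ← image_univ, ← eVariationOn.comp_eq_of_monotoneOn _ _
    (monotone_inclLeft.monotoneOn _), ← eVariationOn.comp_eq_of_monotoneOn _ _
    (monotone_inclRight.monotoneOn _)]
  gcongr <;> refine eVariationOn_le_of_edist_le fun a _ b _ => ?_ <;>
    simp only [Function.comp_apply, edist_dist, dist_eq_norm] <;> gcongr
  exacts [hT.norm_sub_inclLeft_le f b a, hT.norm_sub_inclRight_le f b a]

theorem var_le (hT : IsOddEvenSplit T) {f : X₀ → ℕ →C₀ β} (hf : BoundedVariationOn f univ) :
    var (T f) ≤ 2 * var f + (‖f 1‖ + ‖f 0‖) := by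
  rw [var_eq_toReal_eVariationOn, var_eq_toReal_eVariationOn]
  calc (eVariationOn (T f) univ).toReal
      ≤ (eVariationOn f univ + edist (T f (inclLeft 1)) (T f (inclRight 0)) +
          eVariationOn f univ).toReal :=
        ENNReal.toReal_mono (by finiteness) (hT.eVariationOn_le f)
    _ = 2 * (eVariationOn f univ).toReal + dist (T f (inclLeft 1)) (T f (inclRight 0)) := by
        rw [ENNReal.toReal_add (by finiteness) hf, ENNReal.toReal_add hf (edist_ne_top _ _),
          ← dist_edist]
        ring
    _ ≤ 2 * (eVariationOn f univ).toReal + (‖f 1‖ + ‖f 0‖) := by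
        gcongr
        exact (dist_le_norm_add_norm _ _).trans (add_le_add (hT.norm_apply_inclLeft_le f 1)
          (hT.norm_apply_inclRight_le f 0))

theorem ACnorm_le (hT : IsOddEvenSplit T) {f : X₀ → ℕ →C₀ β} (hf : AbsCont f) :
    ACnorm (T f) ≤ 3 * ACnorm f := by
  have hbv := hf.boundedVariationOn
  have hbdd := hbv.bddAbove_range_norm
  have hsup := hT.supNorm_le hbdd
  have hvar := hT.var_le hbv
  have h₀ : ‖f 0‖ ≤ supNorm f := supNorm_eq_iSup f ▸ le_ciSup hbdd 0
  have h₁ : ‖f 1‖ ≤ supNorm f := supNorm_eq_iSup f ▸ le_ciSup hbdd 1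
  have hvar₀ : 0 ≤ var f := var_eq_toReal_eVariationOn f ▸ ENNReal.toReal_nonneg
  rw [ACnorm, ACnorm]
  linarith

end IsOddEvenSplit

end OddEvenSplit

/-- Example 4.1: the "odd/even splitting" operator
`T : AC([0,1], c₀) → AC([0,1] ∪ [2,3], c₀)`, `Tf(x) = (λ₁, λ₃, …)` and
`Tf(2+x) = (λ₂, λ₄, …)` for `f(x) = (λ₁, λ₂, …)`, is a linear, bijective (between the
AC spaces), separating and continuous map whose inverse is not separating. -/
theorem separating_not_biseparating_example
    (T : ((Set.Icc (0:ℝ) 1) → ZeroAtInftyContinuousMap ℕ ℝ) →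
        ((Set.Icc (0:ℝ) 1 ∪ Set.Icc (2:ℝ) 3 : Set ℝ) → ZeroAtInftyContinuousMap ℕ ℝ))
    (hT : ∀ (f : (Set.Icc (0:ℝ) 1) → ZeroAtInftyContinuousMap ℕ ℝ)
        (x : ℝ) (hx : x ∈ Set.Icc (0:ℝ) 1),
      (∀ k : ℕ, T f ⟨x, Set.mem_union_left _ hx⟩ k = f ⟨x, hx⟩ (2 * k)) ∧
      (∀ k : ℕ, T f ⟨x + 2, Set.mem_union_right _
          ⟨by linarith [hx.1], by linarith [hx.2]⟩⟩ k = f ⟨x, hx⟩ (2 * k + 1))) :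
    (∀ f g, T (f + g) = T f + T g) ∧
    (∀ (c : ℝ) f, T (c • f) = c • T f) ∧
    (∀ f, AbsCont f → AbsCont (T f)) ∧
    (∀ g, AbsCont g → ∃! f, AbsCont f ∧ T f = g) ∧
    Separating T ∧
    (∃ K : ℝ, 0 ≤ K ∧ ∀ f, AbsCont f → ACnorm (T f) ≤ K * ACnorm f) ∧
    ¬ (∀ f g, AbsCont f → AbsCont g →
        (∀ y, T f y = 0 ∨ T g y = 0) → ∀ x, f x = 0 ∨ g x = 0) := by
  have hsplit : IsOddEvenSplit T := fun f x k => ⟨(hT f x x.2).1 k, (hT f x x.2).2 k⟩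
  refine ⟨hsplit.map_add, hsplit.map_smul, fun f => hsplit.absCont_apply, fun g hg => ?_,
    hsplit.separating, ⟨3, by norm_num, fun f => hsplit.ACnorm_le⟩, fun hinv => ?_⟩
  · exact ⟨oddEvenMerge g, ⟨absCont_oddEvenMerge hg, hsplit.apply_oddEvenMerge g⟩,
      fun f hf => hsplit.injective (hf.2.trans (hsplit.apply_oddEvenMerge g).symm)⟩
  · obtain ⟨f, g, hf, hg, hfg, hne⟩ := hsplit.exists_absCont_disjoint_apply
    exact (hinv f g hf hg hfg 0).elim (hne 0).1 (hne 0).2
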